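/- Let P, Q, P', Q' be lattices with P and Q nonempty, and let ψ: P×Q → P'×Q' be a map preserving the four pre-bilattice operations: ψ(x∨ₜy)=ψ(x)∨ₜψ(y), ψ(x∧ₜy)=ψ(x)∧ₜψ(y), ψ(x∨ₖy)=ψ(x)∨ₖψ(y), ψ(x∧ₖy)=ψ(x)∧ₖψ(y), where on each product the operations are those of P⊙Q and P'⊙Q' respectively. Then there exist lattice homomorphisms h₁: P → P' and h₂: Q → Q' such that ψ(a,b) = (h₁(a), h₂(b)) for all (a,b) ∈ P×Q. -/

import Mathlib

/-- Truth join of the pre-bilattice `P ⊙ Q`. -/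
def joinT {P Q : Type*} [Lattice P] [Lattice Q] (p q : P × Q) : P × Q :=
  (p.1 ⊔ q.1, p.2 ⊓ q.2)

/-- Truth meet of the pre-bilattice `P ⊙ Q`. -/
def meetT {P Q : Type*} [Lattice P] [Lattice Q] (p q : P × Q) : P × Q :=
  (p.1 ⊓ q.1, p.2 ⊔ q.2)

/-- Knowledge join of the pre-bilattice `P ⊙ Q`. -/
def joinK {P Q : Type*} [Lattice P] [Lattice Q] (p q : P × Q) : P × Q :=
  (p.1 ⊔ q.1, p.2 ⊔ q.2)

/-- Knowledge meet of the pre-bilattice `P ⊙ Q`. -/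
def meetK {P Q : Type*} [Lattice P] [Lattice Q] (p q : P × Q) : P × Q :=
  (p.1 ⊓ q.1, p.2 ⊓ q.2)

/-!
On two points with the same first coordinate the truth join and the knowledge meet agree;
on two points with the same second coordinate the knowledge join and the truth join agree.
Applying `ψ`, the first (resp. second) coordinates of the images have equal join and meet,
so they coincide: the first coordinate of `ψ (a, b)` depends only on `a`, the second only
on `b`. The two resulting maps preserve `⊔` and `⊓` because `joinK` and `meetK` are the
componentwise lattice operations.
-/

section PreBilattice

variable {P Q P' Q' : Type*} [Lattice P] [Lattice Q] [Lattice P'] [Lattice Q']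

theorem joinT_eq_meetK_of_fst_eq {x y : P × Q} (h : x.1 = y.1) : joinT x y = meetK x y := by
  simp [joinT, meetK, h]

theorem joinK_eq_joinT_of_snd_eq {x y : P × Q} (h : x.2 = y.2) : joinK x y = joinT x y := by
  simp [joinK, joinT, h]

variable {ψ : P × Q → P' × Q'}

theorem fst_apply_eq_of_fst_eq (hvt : ∀ x y, ψ (joinT x y) = joinT (ψ x) (ψ y))
    (hmk : ∀ x y, ψ (meetK x y) = meetK (ψ x) (ψ y)) {x y : P × Q} (h : x.1 = y.1) :
    (ψ x).1 = (ψ y).1 := by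
  have key := congrArg (fun z => (ψ z).1) (joinT_eq_meetK_of_fst_eq h)
  rw [hvt, hmk] at key
  exact sup_eq_inf.mp key

theorem snd_apply_eq_of_snd_eq (hvk : ∀ x y, ψ (joinK x y) = joinK (ψ x) (ψ y))
    (hvt : ∀ x y, ψ (joinT x y) = joinT (ψ x) (ψ y)) {x y : P × Q} (h : x.2 = y.2) :
    (ψ x).2 = (ψ y).2 := by
  have key := congrArg (fun z => (ψ z).2) (joinK_eq_joinT_of_snd_eq h)
  rw [hvk, hvt] at key
  exact sup_eq_inf.mp key

theorem fst_apply_sup (hvk : ∀ x y, ψ (joinK x y) = joinK (ψ x) (ψ y)) (a a' : P) (b : Q) :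
    (ψ (a ⊔ a', b)).1 = (ψ (a, b)).1 ⊔ (ψ (a', b)).1 := by
  simpa [joinK] using congrArg (·.1) (hvk (a, b) (a', b))

theorem fst_apply_inf (hmk : ∀ x y, ψ (meetK x y) = meetK (ψ x) (ψ y)) (a a' : P) (b : Q) :
    (ψ (a ⊓ a', b)).1 = (ψ (a, b)).1 ⊓ (ψ (a', b)).1 := by
  simpa [meetK] using congrArg (·.1) (hmk (a, b) (a', b))

theorem snd_apply_sup (hvk : ∀ x y, ψ (joinK x y) = joinK (ψ x) (ψ y)) (a : P) (b b' : Q) :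
    (ψ (a, b ⊔ b')).2 = (ψ (a, b)).2 ⊔ (ψ (a, b')).2 := by
  simpa [joinK] using congrArg (·.2) (hvk (a, b) (a, b'))

theorem snd_apply_inf (hmk : ∀ x y, ψ (meetK x y) = meetK (ψ x) (ψ y)) (a : P) (b b' : Q) :
    (ψ (a, b ⊓ b')).2 = (ψ (a, b)).2 ⊓ (ψ (a, b')).2 := by
  simpa [meetK] using congrArg (·.2) (hmk (a, b) (a, b'))

end PreBilattice

theorem stmt15_general {P Q P' Q' : Type*} [Lattice P] [Lattice Q] [Lattice P'] [Lattice Q']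
    [Nonempty P] [Nonempty Q]
    (ψ : P × Q → P' × Q')
    (hvt : ∀ x y : P × Q, ψ (joinT x y) = joinT (ψ x) (ψ y))
    (hvk : ∀ x y : P × Q, ψ (joinK x y) = joinK (ψ x) (ψ y))
    (hmk : ∀ x y : P × Q, ψ (meetK x y) = meetK (ψ x) (ψ y)) :
    ∃ (h₁ : P → P') (h₂ : Q → Q'),
      (∀ a b : P, h₁ (a ⊔ b) = h₁ a ⊔ h₁ b) ∧
      (∀ a b : P, h₁ (a ⊓ b) = h₁ a ⊓ h₁ b) ∧
      (∀ a b : Q, h₂ (a ⊔ b) = h₂ a ⊔ h₂ b) ∧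
      (∀ a b : Q, h₂ (a ⊓ b) = h₂ a ⊓ h₂ b) ∧
      ∀ (a : P) (b : Q), ψ (a, b) = (h₁ a, h₂ b) := by
  obtain ⟨p₀⟩ := ‹Nonempty P›
  obtain ⟨q₀⟩ := ‹Nonempty Q›
  refine ⟨fun a => (ψ (a, q₀)).1, fun b => (ψ (p₀, b)).2,
    fun a a' => fst_apply_sup hvk a a' q₀, fun a a' => fst_apply_inf hmk a a' q₀,
    fun b b' => snd_apply_sup hvk p₀ b b', fun b b' => snd_apply_inf hmk p₀ b b',
    fun a b => Prod.ext ?_ ?_⟩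
  · exact fst_apply_eq_of_fst_eq hvt hmk rfl
  · exact snd_apply_eq_of_snd_eq hvk hvt rfl

/-- Every map `ψ : P × Q → P' × Q'` preserving the four pre-bilattice operations of
`P ⊙ Q` and `P' ⊙ Q'` (with `P`, `Q` nonempty) decomposes as a product of lattice
homomorphisms: `ψ (a,b) = (h₁ a, h₂ b)`. -/
theorem stmt15 {P Q P' Q' : Type*} [Lattice P] [Lattice Q] [Lattice P'] [Lattice Q']
    [Nonempty P] [Nonempty Q]
    (ψ : P × Q → P' × Q')
    (hvt : ∀ x y : P × Q, ψ (joinT x y) = joinT (ψ x) (ψ y))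
    (hmt : ∀ x y : P × Q, ψ (meetT x y) = meetT (ψ x) (ψ y))
    (hvk : ∀ x y : P × Q, ψ (joinK x y) = joinK (ψ x) (ψ y))
    (hmk : ∀ x y : P × Q, ψ (meetK x y) = meetK (ψ x) (ψ y)) :
    ∃ (h₁ : P → P') (h₂ : Q → Q'),
      (∀ a b : P, h₁ (a ⊔ b) = h₁ a ⊔ h₁ b) ∧
      (∀ a b : P, h₁ (a ⊓ b) = h₁ a ⊓ h₁ b) ∧
      (∀ a b : Q, h₂ (a ⊔ b) = h₂ a ⊔ h₂ b) ∧
      (∀ a b : Q, h₂ (a ⊓ b) = h₂ a ⊓ h₂ b) ∧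
      ∀ (a : P) (b : Q), ψ (a, b) = (h₁ a, h₂ b) :=
  stmt15_general ψ hvt hvk hmk
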